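/- arXiv:2503.07064 — 2 statements merged into one kernel-verified Lean document; each statement's English description precedes it below -/
import Mathlib

section
/- Let Φ be a p×p matrix with operator norm z = ‖Φ‖ < 1 and M a p×p matrix. Then the operator norm of S₁ = ∑_{s=1}^n ∑_{t=1}^n ∑_{i=1}^{(s∧t)−1} (Φ^{t−1−i} ⊗ Φ^{s−1−i}) (M ⊗ M) ((Φᵀ)^{t−1−i} ⊗ (Φᵀ)^{s−1−i}) is bounded by C·n for a constant C depending only on z and ‖M‖. -/
/-!
For the L2 operator norm, `‖A ⊗ₖ B‖ ≤ ‖A‖ * ‖B‖`: write `A ⊗ₖ B = (A ⊗ₖ 1) * (1 ⊗ₖ B)` and note that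
`1 ⊗ₖ B` (resp. `A ⊗ₖ 1`) acts on a vector of `𝕜^(m × n)` by applying `B` (resp. `A`) to each of
its slices. Hence, with `z = ‖Φ‖`, the `(s, t, i)` term of `S₁` has norm at most
`‖M‖² z^(t-1-i) z^(s-1-i)`. Summing first over `s, t ∈ (i, n]` gives two geometric sums, so each of
the `n - 1` values of `i` contributes at most `‖M‖² / (1 - z)²`.
-/

open Matrix Kronecker Finset
open scoped Matrix.Norms.L2Operator

namespace Matrix

variable {𝕜 : Type*} [RCLike 𝕜] {l m n : Type*}

lemma l2_opNorm_le_of_mulVec [Fintype m] [Fintype n] [DecidableEq n] (A : Matrix m n 𝕜) {C : ℝ}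
    (hC : 0 ≤ C) (h : ∀ x : EuclideanSpace 𝕜 n, ‖WithLp.toLp 2 (A *ᵥ x.ofLp)‖ ≤ C * ‖x‖) :
    ‖A‖ ≤ C := by
  rw [l2_opNorm_def]
  exact ContinuousLinearMap.opNorm_le_bound _ hC h

lemma l2_opNorm_one_le [Fintype n] [DecidableEq n] : ‖(1 : Matrix n n 𝕜)‖ ≤ 1 := by
  rw [cstar_norm_def, map_one]
  exact ContinuousLinearMap.norm_id_le

lemma l2_opNorm_pow_le [Fintype n] [DecidableEq n] (A : Matrix n n 𝕜) (k : ℕ) :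
    ‖A ^ k‖ ≤ ‖A‖ ^ k := by
  rcases k with _ | k
  · simpa using l2_opNorm_one_le
  · exact norm_pow_le' A k.succ_pos

lemma l2_opNorm_transpose [Fintype m] [Fintype n] [DecidableEq m] [DecidableEq n]
    (A : Matrix m n ℝ) : ‖Aᵀ‖ = ‖A‖ := by
  rw [← conjTranspose_eq_transpose_of_trivial, l2_opNorm_conjTranspose]

lemma l2_opNorm_mul_mul_transpose_le [Fintype m] [Fintype n] [DecidableEq m] [DecidableEq n]
    (K : Matrix m n ℝ) (X : Matrix n n ℝ) : ‖K * X * Kᵀ‖ ≤ ‖K‖ ^ 2 * ‖X‖ := by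
  calc ‖K * X * Kᵀ‖ ≤ ‖K‖ * ‖X‖ * ‖Kᵀ‖ :=
        (l2_opNorm_mul _ _).trans (mul_le_mul_of_nonneg_right (l2_opNorm_mul _ _) (norm_nonneg _))
    _ = ‖K‖ ^ 2 * ‖X‖ := by rw [l2_opNorm_transpose]; ring

lemma _root_.EuclideanSpace.norm_sq_prod_eq_sum_fst [Fintype m] [Fintype n]
    (x : EuclideanSpace 𝕜 (m × n)) : ‖x‖ ^ 2 = ∑ i, ‖WithLp.toLp 2 fun j => x (i, j)‖ ^ 2 := by
  simp_rw [EuclideanSpace.norm_sq_eq, Fintype.sum_prod_type]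

lemma _root_.EuclideanSpace.norm_sq_prod_eq_sum_snd [Fintype m] [Fintype n]
    (x : EuclideanSpace 𝕜 (m × n)) : ‖x‖ ^ 2 = ∑ j, ‖WithLp.toLp 2 fun i => x (i, j)‖ ^ 2 := by
  simp_rw [EuclideanSpace.norm_sq_eq, Fintype.sum_prod_type_right]

lemma kronecker_one_mulVec_apply [Fintype n] [Fintype l] [DecidableEq l] (A : Matrix m n 𝕜)
    (v : n × l → 𝕜) (i : m) (k : l) :
    ((A ⊗ₖ (1 : Matrix l l 𝕜)) *ᵥ v) (i, k) = (A *ᵥ fun j => v (j, k)) i := by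
  simp [mulVec, dotProduct, Fintype.sum_prod_type, one_apply]

lemma one_kronecker_mulVec_apply [Fintype n] [Fintype l] [DecidableEq l] (B : Matrix m n 𝕜)
    (v : l × n → 𝕜) (k : l) (i : m) :
    (((1 : Matrix l l 𝕜) ⊗ₖ B) *ᵥ v) (k, i) = (B *ᵥ fun j => v (k, j)) i := by
  simp [mulVec, dotProduct, Fintype.sum_prod_type, one_apply]

variable [Fintype l] [Fintype m] [Fintype n] [DecidableEq l] [DecidableEq n]

lemma l2_opNorm_kronecker_one_le (A : Matrix m n 𝕜) : ‖A ⊗ₖ (1 : Matrix l l 𝕜)‖ ≤ ‖A‖ := by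
  refine l2_opNorm_le_of_mulVec _ (norm_nonneg _) fun x => ?_
  refine (sq_le_sq₀ (norm_nonneg _) (by positivity)).mp ?_
  rw [EuclideanSpace.norm_sq_prod_eq_sum_snd, mul_pow, EuclideanSpace.norm_sq_prod_eq_sum_snd,
    Finset.mul_sum]
  refine Finset.sum_le_sum fun k _ => ?_
  have h := l2_opNorm_mulVec A (WithLp.toLp 2 fun j => x (j, k))
  simp only at h
  simp only [kronecker_one_mulVec_apply]
  rw [← mul_pow]
  exact pow_le_pow_left₀ (norm_nonneg _) h 2

lemma l2_opNorm_one_kronecker_le (B : Matrix m n 𝕜) : ‖(1 : Matrix l l 𝕜) ⊗ₖ B‖ ≤ ‖B‖ := by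
  refine l2_opNorm_le_of_mulVec _ (norm_nonneg _) fun x => ?_
  refine (sq_le_sq₀ (norm_nonneg _) (by positivity)).mp ?_
  rw [EuclideanSpace.norm_sq_prod_eq_sum_fst, mul_pow, EuclideanSpace.norm_sq_prod_eq_sum_fst,
    Finset.mul_sum]
  refine Finset.sum_le_sum fun k _ => ?_
  have h := l2_opNorm_mulVec B (WithLp.toLp 2 fun j => x (k, j))
  simp only at h
  simp only [one_kronecker_mulVec_apply]
  rw [← mul_pow]
  exact pow_le_pow_left₀ (norm_nonneg _) h 2

lemma l2_opNorm_kronecker_le {o : Type*} [Fintype o] [DecidableEq o] (A : Matrix m n 𝕜)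
    (B : Matrix l o 𝕜) : ‖A ⊗ₖ B‖ ≤ ‖A‖ * ‖B‖ := by
  have h : A ⊗ₖ B = (A ⊗ₖ (1 : Matrix l l 𝕜)) * ((1 : Matrix n n 𝕜) ⊗ₖ B) := by
    rw [← mul_kronecker_mul, Matrix.mul_one, Matrix.one_mul]
  rw [h]
  exact (l2_opNorm_mul _ _).trans (mul_le_mul (l2_opNorm_kronecker_one_le A)
    (l2_opNorm_one_kronecker_le B) (norm_nonneg _) (norm_nonneg _))

lemma l2_opNorm_kronecker_pow_mul_mul_le (Φ M : Matrix n n ℝ) (hΦ : ‖Φ‖ ≤ 1) (a b : ℕ) :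
    ‖((Φ ^ a) ⊗ₖ (Φ ^ b)) * (M ⊗ₖ M) * ((Φᵀ ^ a) ⊗ₖ (Φᵀ ^ b))‖ ≤
      ‖M‖ ^ 2 * (‖Φ‖ ^ a * ‖Φ‖ ^ b) := by
  have hpow : ‖Φ‖ ^ a * ‖Φ‖ ^ b ≤ 1 :=
    mul_le_one₀ (pow_le_one₀ (norm_nonneg _) hΦ) (by positivity) (pow_le_one₀ (norm_nonneg _) hΦ)
  rw [← transpose_pow, ← transpose_pow, kroneckerMap_transpose]
  calc _ ≤ ‖(Φ ^ a) ⊗ₖ (Φ ^ b)‖ ^ 2 * ‖M ⊗ₖ M‖ := l2_opNorm_mul_mul_transpose_le _ _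
    _ ≤ (‖Φ‖ ^ a * ‖Φ‖ ^ b) ^ 2 * (‖M‖ * ‖M‖) := by
      gcongr
      · exact (l2_opNorm_kronecker_le _ _).trans
          (mul_le_mul (l2_opNorm_pow_le _ _) (l2_opNorm_pow_le _ _) (norm_nonneg _) (by positivity))
      · exact l2_opNorm_kronecker_le _ _
    _ = ‖M‖ ^ 2 * (‖Φ‖ ^ a * ‖Φ‖ ^ b) ^ 2 := by ring
    _ ≤ ‖M‖ ^ 2 * (‖Φ‖ ^ a * ‖Φ‖ ^ b) :=
      mul_le_mul_of_nonneg_left (pow_le_of_le_one (by positivity) hpow two_ne_zero) (sq_nonneg _)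

end Matrix

namespace Finset

lemma sum_Icc_sum_Icc_sum_Icc_min_comm {β : Type*} [AddCommMonoid β] (f : ℕ → ℕ → ℕ → β)
    (n : ℕ) :
    ∑ s ∈ Icc 1 n, ∑ t ∈ Icc 1 n, ∑ i ∈ Icc 1 (min s t - 1), f s t i =
      ∑ i ∈ Ico 1 n, ∑ s ∈ Ioc i n, ∑ t ∈ Ioc i n, f s t i := by
  calc _ = ∑ s ∈ Icc 1 n, ∑ i ∈ Ico 1 s, ∑ t ∈ Ioc i n, f s t i := by
        refine sum_congr rfl fun s hs => sum_comm' fun t i => ?_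
        simp only [mem_Icc, mem_Ico, mem_Ioc] at hs ⊢
        omega
    _ = _ := sum_comm' fun s i => by simp only [mem_Icc, mem_Ico, mem_Ioc]; omega

lemma sum_Ioc_pow_sub_one_sub_le {w : ℝ} (hw0 : 0 ≤ w) (hw1 : w < 1) (i n : ℕ) :
    ∑ s ∈ Ioc i n, w ^ (s - 1 - i) ≤ (1 - w)⁻¹ := by
  rw [← Ico_add_one_add_one_eq_Ioc, sum_Ico_eq_sum_range, range_eq_Ico]
  simp only [Nat.add_sub_add_right, show ∀ k, i + 1 + k - 1 - i = k by omega]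
  simpa using geom_sum_Ico_le_of_lt_one (m := 0) (n := n - i) hw0 hw1

end Finset

/-- The norm of
`S₁ = ∑_{s=1}^n ∑_{t=1}^n ∑_{i=1}^{min(s,t)-1}
  (Φ^{t-1-i} ⊗ Φ^{s-1-i}) (M ⊗ M) ((Φᵀ)^{t-1-i} ⊗ (Φᵀ)^{s-1-i})`
is bounded by `C·n` for a constant `C` depending only on `‖Φ‖` and `‖M‖`,
when `‖Φ‖ < 1` in the operator norm. -/
theorem S1_bound {p : ℕ} (Φ M : Matrix (Fin p) (Fin p) ℝ)
    (hz : ‖Matrix.toEuclideanCLM (𝕜 := ℝ) Φ‖ < 1) :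
    ∃ C : ℝ, ∀ n : ℕ,
      ‖Matrix.toEuclideanCLM (𝕜 := ℝ)
        (∑ s ∈ Finset.Icc 1 n, ∑ t ∈ Finset.Icc 1 n, ∑ i ∈ Finset.Icc 1 (min s t - 1),
          ((Φ ^ (t - 1 - i)) ⊗ₖ (Φ ^ (s - 1 - i))) * (M ⊗ₖ M) *
            ((Φᵀ ^ (t - 1 - i)) ⊗ₖ (Φᵀ ^ (s - 1 - i))))‖ ≤ C * n := by
  rw [l2_opNorm_toEuclideanCLM] at hz
  refine ⟨‖M‖ ^ 2 * (1 - ‖Φ‖)⁻¹ ^ 2, fun n => ?_⟩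
  rw [l2_opNorm_toEuclideanCLM, sum_Icc_sum_Icc_sum_Icc_min_comm]
  calc _ ≤ ∑ i ∈ Ico 1 n, ∑ s ∈ Ioc i n, ∑ t ∈ Ioc i n,
          ‖M‖ ^ 2 * (‖Φ‖ ^ (s - 1 - i) * ‖Φ‖ ^ (t - 1 - i)) :=
        norm_sum_le_of_le _ fun i _ => norm_sum_le_of_le _ fun s _ => norm_sum_le_of_le _ fun t _ =>
          (l2_opNorm_kronecker_pow_mul_mul_le Φ M hz.le _ _).trans_eq (by ring)
    _ = ‖M‖ ^ 2 * ∑ i ∈ Ico 1 n,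
          (∑ s ∈ Ioc i n, ‖Φ‖ ^ (s - 1 - i)) * ∑ t ∈ Ioc i n, ‖Φ‖ ^ (t - 1 - i) := by
        simp_rw [sum_mul_sum, mul_sum]
    _ ≤ ‖M‖ ^ 2 * ∑ i ∈ Ico 1 n, (1 - ‖Φ‖)⁻¹ * (1 - ‖Φ‖)⁻¹ := by
        gcongr <;> exact sum_Ioc_pow_sub_one_sub_le (norm_nonneg _) hz _ _
    _ ≤ ‖M‖ ^ 2 * (1 - ‖Φ‖)⁻¹ ^ 2 * n := by
        rw [sum_const, Nat.card_Ico, nsmul_eq_mul, ← sq, mul_assoc, mul_comm _ (n : ℝ)]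
        gcongr
        exact Nat.cast_le.mpr (Nat.sub_le n 1)
end

section
/- Let Φ be the companion matrix of (φ_1,...,φ_p), A11 = (I_p − ∑_{k=1}^p φ_k Φ^k)⁻¹ (assumed to exist), δ_p the first basis vector of ℝ^p, and R the p×p matrix whose j-th column is Φ^{j−1} A11 δ_p for j = 1,...,p. Then with φ = (φ_1,...,φ_p)ᵀ, we have φᵀ R φ = δ_pᵀ (∑_{k=1}^p φ_k Φ^k) A11 δ_p, and hence φᵀ R φ − δ_pᵀ A11 δ_p = −1. -/
/-!
The first row of `Φ` is `φᵀ = δᵀ Φ`, so the `j`-th entry of `φᵀ R` is `δᵀ Φ^(j+1) A11 δ` and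
`φᵀ R φ = δᵀ S A11 δ` with `S = ∑ₖ φₖ Φᵏ`. Since `(1 - S) A11 = 1`, we have `S A11 = A11 - 1`,
whence the difference `-1`.
-/

open Matrix Finset

def companion {p : ℕ} (φ : Fin p → ℝ) : Matrix (Fin p) (Fin p) ℝ :=
  Matrix.of fun i j => if (i : ℕ) = 0 then φ j else if (i : ℕ) = (j : ℕ) + 1 then 1 else 0

theorem single_one_vecMul_dotProduct_single_one {n R : Type*} [Fintype n] [DecidableEq n]
    [NonAssocSemiring R] (M : Matrix n n R) (i j : n) :
    Pi.single i 1 ᵥ* M ⬝ᵥ Pi.single j 1 = M i j := by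
  rw [single_one_vecMul, dotProduct_single, mul_one, row_apply]

theorem single_zero_vecMul_companion {p : ℕ} [NeZero p] (φ : Fin p → ℝ) :
    Pi.single 0 1 ᵥ* companion φ = φ := by
  ext j
  simp [companion]

theorem vecMul_of_mulVec {m n R : Type*} [Fintype m] [NonUnitalNonAssocSemiring R]
    (M : n → Matrix m m R) (u v : m → R) :
    v ᵥ* Matrix.of (fun i j => (M j *ᵥ u) i) = fun j => v ⬝ᵥ M j *ᵥ u :=
  rfl

theorem vecMul_of_pow_mul_mulVec_dotProduct {p : ℕ} {R : Type*} [CommSemiring R]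
    (Φ B : Matrix (Fin p) (Fin p) R) (w u c : Fin p → R) :
    (w ᵥ* Φ) ᵥ* Matrix.of (fun i (j : Fin p) => ((Φ ^ (j : ℕ) * B) *ᵥ u) i) ⬝ᵥ c =
      w ᵥ* ((∑ k : Fin p, c k • Φ ^ ((k : ℕ) + 1)) * B) ⬝ᵥ u := by
  rw [vecMul_of_mulVec, sum_mul, vecMul_sum, sum_dotProduct, dotProduct_comm]
  refine sum_congr rfl fun j _ => ?_
  dsimp only
  rw [smul_mul_assoc, vecMul_smul, smul_dotProduct, dotProduct_mulVec, vecMul_vecMul,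
    ← mul_assoc, ← pow_succ', smul_eq_mul]

theorem mul_inv_one_sub {n R : Type*} [Fintype n] [DecidableEq n] [CommRing R]
    (S : Matrix n n R) (h : IsUnit (1 - S)) : S * (1 - S)⁻¹ = (1 - S)⁻¹ - 1 := by
  have h_inv := mul_nonsing_inv (1 - S) ((isUnit_iff_isUnit_det _).mp h)
  rw [sub_mul, one_mul] at h_inv
  rw [← sub_sub_cancel (1 - S)⁻¹ (S * (1 - S)⁻¹), h_inv]

/-- With `A11 = (I - ∑_{k=1}^p φ_k Φ^k)⁻¹` and `R` the matrix whose `j`-th column is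
`Φ^{j-1} A11 δ_p`, one has `φᵀ R φ = δ_pᵀ (∑_k φ_k Φ^k) A11 δ_p` and consequently
`φᵀ R φ - δ_pᵀ A11 δ_p = -1`. -/
theorem companion_R_identity {p : ℕ} [NeZero p] (φ : Fin p → ℝ)
    (hU : IsUnit (1 - ∑ k : Fin p, φ k • (companion φ) ^ ((k : ℕ) + 1))) :
    let Φ := companion φ
    let S : Matrix (Fin p) (Fin p) ℝ := ∑ k : Fin p, φ k • Φ ^ ((k : ℕ) + 1)
    let A11 : Matrix (Fin p) (Fin p) ℝ := (1 - S)⁻¹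
    let δ : Fin p → ℝ := Pi.single 0 1
    let R : Matrix (Fin p) (Fin p) ℝ :=
      Matrix.of fun i j => ((Φ ^ (j : ℕ) * A11).mulVec δ) i
    (φ ᵥ* R ⬝ᵥ φ = δ ᵥ* (S * A11) ⬝ᵥ δ) ∧
      (φ ᵥ* R ⬝ᵥ φ - δ ᵥ* A11 ⬝ᵥ δ = -1) := by
  intro Φ S A11 δ R
  have hR : φ ᵥ* R ⬝ᵥ φ = δ ᵥ* (S * A11) ⬝ᵥ δ := by
    have h := vecMul_of_pow_mul_mulVec_dotProduct Φ A11 δ δ φ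
    rwa [show δ ᵥ* Φ = φ from single_zero_vecMul_companion φ] at h
  refine ⟨hR, ?_⟩
  rw [hR, mul_inv_one_sub S hU, single_one_vecMul_dotProduct_single_one,
    single_one_vecMul_dotProduct_single_one, Matrix.sub_apply, one_apply_eq]
  exact sub_sub_cancel_left _ _
end
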